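/- arXiv:1008.5265 — 4 statements merged into one kernel-verified Lean document; each statement's English description precedes it below -/
import Mathlib

section
/- Let p ∈ S^{2n+1} ⊂ ℂ^{n+1} and v ∈ T_p S^{2n+1}. Let γ_R(t) = p cos(‖v‖t) + (v/‖v‖) sin(‖v‖t) be the great circle with γ_R(0)=p, γ̇_R(0)=v, and let c = ⟨v, i·p⟩ (the real inner product of v with i·p). Then the curve γ(t) = e^{-ict} γ_R(t) is horizontal, i.e. ⟨γ̇(t), i·γ(t)⟩ = 0 for all t, where ⟨·,·⟩ denotes the real inner product on ℂ^{n+1} ≅ ℝ^{2n+2}. -/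
/-!
Write `ω(x, y) = Re ⟪x, i y⟫ = -Im ⟪x, y⟫`. Since `e^{-ict}` has modulus one, multiplying a curve
`α` by it changes `ω(α', α)` only through the derivative of the phase, by `-c ‖α‖²`. Along the
great circle, `ω(γ_R', γ_R)` is constant, equal to `ω(v, p) = c`, and `‖γ_R‖ = 1`; the two
contributions cancel.
-/

open Complex (I)
open scoped InnerProductSpace

section

variable {E : Type*} [NormedAddCommGroup E] [InnerProductSpace ℂ E]

theorem re_inner_I_smul (x y : E) : (⟪x, I • y⟫_ℂ).re = -(⟪x, y⟫_ℂ).im := by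
  rw [inner_smul_right, Complex.I_mul_re]

theorem hasDerivAt_exp_mul_I_smul (c : ℝ) {α : ℝ → E} {α' : E} {t : ℝ}
    (h : HasDerivAt α α' t) :
    HasDerivAt (fun s : ℝ => Complex.exp (-(c * s) * I) • α s)
      (Complex.exp (-(c * t) * I) • (α' - (c * I) • α t)) t := by
  have hphase : HasDerivAt (fun s : ℝ => -(c * s) * I) (-c * I) t := by
    simpa using (((hasDerivAt_id t).ofReal_comp.const_mul (c : ℂ)).neg).mul_const I
  refine (hphase.cexp.smul h).congr_deriv ?_
  rw [smul_sub, smul_smul]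
  module

theorem re_inner_deriv_exp_mul_I_smul (c : ℝ) {α : ℝ → E} {α' : E} {t : ℝ}
    (h : HasDerivAt α α' t) :
    (⟪deriv (fun s : ℝ => Complex.exp (-(c * s) * I) • α s) t,
        I • (Complex.exp (-(c * t) * I) • α t)⟫_ℂ).re =
      (⟪α', I • α t⟫_ℂ).re - c * ‖α t‖ ^ 2 := by
  have hunit : (starRingEnd ℂ) (Complex.exp (-(c * t) * I)) * Complex.exp (-(c * t) * I) = 1 := by
    rw [Complex.conj_mul', show -((c : ℂ) * t) * I = ((-(c * t) : ℝ) : ℂ) * I by push_cast; ring,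
      Complex.norm_exp_ofReal_mul_I]
    simp
  rw [(hasDerivAt_exp_mul_I_smul c h).deriv, smul_comm, inner_smul_left, inner_smul_right,
    ← mul_assoc, hunit, one_mul, inner_sub_left, inner_smul_left, inner_smul_right (α t),
    inner_self_eq_norm_sq_to_K, RCLike.ofReal_eq_complex_ofReal]
  have hvertical : (starRingEnd ℂ) (c * I) * (I * (‖α t‖ : ℂ) ^ 2) = ((c * ‖α t‖ ^ 2 : ℝ) : ℂ) := by
    rw [map_mul, Complex.conj_ofReal, Complex.conj_I]
    push_cast
    linear_combination (-(c : ℂ) * ‖α t‖ ^ 2) * Complex.I_sq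
  rw [hvertical, Complex.sub_re, Complex.ofReal_re]

noncomputable def greatCircle (p v : E) (t : ℝ) : E :=
  (Real.cos (‖v‖ * t) : ℂ) • p + ((Real.sin (‖v‖ * t) / ‖v‖ : ℝ) : ℂ) • v

theorem hasDerivAt_greatCircle (p v : E) (t : ℝ) :
    HasDerivAt (greatCircle p v)
      (((-(‖v‖ * Real.sin (‖v‖ * t)) : ℝ) : ℂ) • p + (Real.cos (‖v‖ * t) : ℂ) • v) t := by
  rcases eq_or_ne v 0 with rfl | hv
  · have hconst : greatCircle p (0 : E) = fun _ => p := by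
      funext s
      simp [greatCircle]
    simpa [hconst] using hasDerivAt_const t p
  have hw : ‖v‖ ≠ 0 := norm_ne_zero_iff.mpr hv
  have hlin : HasDerivAt (fun s : ℝ => ‖v‖ * s) ‖v‖ t := by
    simpa using (hasDerivAt_id t).const_mul ‖v‖
  have hcos := ((Real.hasDerivAt_cos _).comp t hlin).ofReal_comp
  have hsin := (((Real.hasDerivAt_sin _).comp t hlin).div_const ‖v‖).ofReal_comp
  refine ((hcos.smul_const p).add (hsin.smul_const v)).congr_deriv ?_
  congr 3
  · ring
  · field_simp

theorem re_inner_deriv_greatCircle (p v : E) (t : ℝ) :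
    (⟪((-(‖v‖ * Real.sin (‖v‖ * t)) : ℝ) : ℂ) • p + (Real.cos (‖v‖ * t) : ℂ) • v,
        I • greatCircle p v t⟫_ℂ).re = (⟪v, I • p⟫_ℂ).re := by
  rcases eq_or_ne v 0 with rfl | hv
  · simp [greatCircle]
  have hw : ‖v‖ ≠ 0 := norm_ne_zero_iff.mpr hv
  rw [re_inner_I_smul, re_inner_I_smul, neg_inj, greatCircle]
  simp only [inner_add_left, inner_add_right, inner_smul_left, inner_smul_right,
    Complex.conj_ofReal, ← inner_conj_symm p v, inner_self_eq_norm_sq_to_K,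
    RCLike.ofReal_eq_complex_ofReal, ← Complex.ofReal_pow]
  simp only [Complex.add_im, Complex.mul_im, Complex.ofReal_re, Complex.ofReal_im,
    Complex.conj_im]
  field_simp
  linear_combination ‖v‖ * (⟪v, p⟫_ℂ).im * Real.sin_sq_add_cos_sq (‖v‖ * t)

theorem norm_greatCircle {p v : E} (hp : ‖p‖ = 1) (htan : (⟪v, p⟫_ℂ).re = 0) (t : ℝ) :
    ‖greatCircle p v t‖ = 1 := by
  rcases eq_or_ne v 0 with rfl | hv
  · simp [greatCircle, hp]
  have hw : ‖v‖ ≠ 0 := norm_ne_zero_iff.mpr hv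
  refine (pow_eq_one_iff_of_nonneg (norm_nonneg _) two_ne_zero).mp ?_
  rw [← inner_self_eq_norm_sq (𝕜 := ℂ), greatCircle]
  simp only [inner_add_left, inner_add_right, inner_smul_left, inner_smul_right]
  simp only [Complex.conj_ofReal, ← inner_conj_symm p v, inner_self_eq_norm_sq_to_K,
    RCLike.ofReal_eq_complex_ofReal, ← Complex.ofReal_pow, hp]
  simp only [RCLike.re_to_complex, Complex.add_re, Complex.mul_re, Complex.ofReal_re,
    Complex.ofReal_im, Complex.conj_re, htan]
  field_simp
  linear_combination ‖v‖ * Real.sin_sq_add_cos_sq (‖v‖ * t)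

end

/-- Horizontality of the curve `γ(t) = e^{-ict} γ_R(t)` on the sphere `S^{2n+1} ⊂ ℂ^{n+1}`,
where `γ_R` is the great circle through `p` with velocity `v` and `c = ⟨v, i·p⟩` (real inner
product). -/
theorem sphere_geodesic_horizontal (n : ℕ) (p v : EuclideanSpace ℂ (Fin (n + 1)))
    (hp : ‖p‖ = 1) (htan : (inner ℂ v p : ℂ).re = 0)
    (c : ℝ) (hc : c = (inner ℂ v (Complex.I • p) : ℂ).re)
    (γR γ : ℝ → EuclideanSpace ℂ (Fin (n + 1)))
    (hγR : ∀ t, γR t = (Real.cos (‖v‖ * t) : ℂ) • p +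
      ((Real.sin (‖v‖ * t) / ‖v‖ : ℝ) : ℂ) • v)
    (hγ : ∀ t, γ t = Complex.exp (-(c * t) * Complex.I) • γR t) :
    ∀ t, (inner ℂ (deriv γ t) (Complex.I • γ t) : ℂ).re = 0 := by
  intro t
  have hγR' : γR = greatCircle p v := funext hγR
  have hγ' : γ = fun s : ℝ => Complex.exp (-(c * s) * I) • greatCircle p v s := by
    funext s
    rw [hγ, hγR']
  rw [hγ', re_inner_deriv_exp_mul_I_smul c (hasDerivAt_greatCircle p v t),
    re_inner_deriv_greatCircle, norm_greatCircle hp htan, hc]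
  ring
end

section
/- Let p ∈ S^{2n+1} ⊂ ℂ^{n+1} and v ∈ T_p S^{2n+1} with c := ⟨v, i·p⟩ and ‖v‖² = 1 + c² (arc-length parametrization). Then the curve γ(t) = e^{-ict}(p cos(‖v‖t) + (v/‖v‖) sin(‖v‖t)) is periodic (there exists T > 0 with γ(t+T) = γ(t) for all t) if and only if c/√(1+c²) is rational. -/
/-!
Since `‖v‖ = √(1 + c²)` while `|⟪p, v⟫| = |c|`, the vectors `p` and `v` are `ℂ`-linearly
independent. Hence `γ T = γ 0 = p` forces the `v`-coefficient `sin (‖v‖ T)` to vanish and the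
phase `e^{-icT}` to be real, i.e. both `‖v‖ T` and `c T` lie in `π ℤ`, so `c / ‖v‖ ∈ ℚ`.
Conversely, if `c / ‖v‖ = m / k`, then `T = 2πk / ‖v‖` is a common period of all three factors.
-/

open Real

theorem linearIndependent_pair_of_norm_inner_lt {𝕜 E : Type*} [RCLike 𝕜] [NormedAddCommGroup E]
    [InnerProductSpace 𝕜 E] {x y : E} (h : ‖(inner 𝕜 x y : 𝕜)‖ < ‖x‖ * ‖y‖) :
    LinearIndependent 𝕜 ![x, y] := by
  have hx : x ≠ 0 := by
    rintro rfl
    simp at h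
  have hcs : ‖(inner 𝕜 x y : 𝕜)‖ = ‖x‖ * ‖y‖ ↔ x = 0 ∨ ∃ r : 𝕜, y = r • x :=
    (norm_inner_eq_norm_tfae 𝕜 x y).out 0 2
  exact (LinearIndependent.pair_iff' hx).2 fun a hax => h.ne (hcs.2 (.inr ⟨a, hax.symm⟩))

theorem LinearIndependent.eq_one_and_eq_zero_of_smul_add_smul_eq {K V : Type*} [Ring K]
    [AddCommGroup V] [Module K V] {x y : V} (hxy : LinearIndependent K ![x, y]) {a b : K}
    (h : a • x + b • y = x) : a = 1 ∧ b = 0 := by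
  have h0 : (a - 1) • x + b • y = 0 := by rw [sub_smul, one_smul, sub_add_eq_add_sub, h, sub_self]
  obtain ⟨ha, hb⟩ := LinearIndependent.pair_iff.1 hxy _ _ h0
  exact ⟨sub_eq_zero.1 ha, hb⟩

theorem Complex.norm_inner_eq_abs_re_inner_I_smul {E : Type*} [NormedAddCommGroup E]
    [InnerProductSpace ℂ E] {v p : E} (h : (inner ℂ v p : ℂ).re = 0) :
    ‖(inner ℂ v p : ℂ)‖ = |(inner ℂ v (Complex.I • p) : ℂ).re| := by
  rw [inner_smul_right, Complex.mul_re, Complex.I_re, Complex.I_im, h,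
    ← Complex.re_add_im (inner ℂ v p), h]
  simp

theorem exists_rat_div_eq_of_sin_mul_eq_zero {a b T : ℝ} (h : a * T ≠ 0)
    (ha : sin (a * T) = 0) (hb : sin (b * T) = 0) : ∃ q : ℚ, b / a = q := by
  obtain ⟨k, hk⟩ := sin_eq_zero_iff.1 ha
  obtain ⟨m, hm⟩ := sin_eq_zero_iff.1 hb
  have hk0 : (k : ℝ) ≠ 0 := by
    rintro hk0
    rw [hk0, zero_mul] at hk
    exact h hk.symm
  have hT : T ≠ 0 := right_ne_zero_of_mul h
  refine ⟨m / k, ?_⟩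
  push_cast
  rw [div_eq_div_iff (left_ne_zero_of_mul h) hk0]
  apply mul_right_cancel₀ (mul_ne_zero hT pi_ne_zero)
  linear_combination b * T * hk - a * T * hm

theorem exists_pos_mul_eq_int_mul_two_pi {a b : ℝ} (ha : 0 < a) {q : ℚ} (hq : b / a = q) :
    ∃ T > 0, ∃ k m : ℤ, a * T = k * (2 * π) ∧ b * T = m * (2 * π) := by
  have hb : b = q * a := (div_eq_iff ha.ne').1 hq
  have hnum : (q : ℝ) * q.den = q.num := by exact_mod_cast Rat.mul_den_eq_num q
  refine ⟨2 * π * q.den / a, by positivity, q.den, q.num, ?_, ?_⟩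
  · push_cast
    field_simp
  · rw [hb, ← hnum]
    field_simp

section Geodesic

variable {E : Type*} [NormedAddCommGroup E] [InnerProductSpace ℂ E]

noncomputable def sphereGeodesic (p v : E) (c t : ℝ) : E :=
  Complex.exp (-(c * t) * Complex.I) •
    ((Real.cos (‖v‖ * t) : ℂ) • p + ((Real.sin (‖v‖ * t) / ‖v‖ : ℝ) : ℂ) • v)

variable {p v : E} {c : ℝ}

@[simp]
theorem sphereGeodesic_zero : sphereGeodesic p v c 0 = p := by
  simp [sphereGeodesic]

theorem sphereGeodesic_periodic {T : ℝ} {k m : ℤ} (hk : ‖v‖ * T = k * (2 * π))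
    (hm : c * T = m * (2 * π)) : Function.Periodic (sphereGeodesic p v c) T := by
  intro t
  have hω : ‖v‖ * (t + T) = ‖v‖ * t + k * (2 * π) := by rw [mul_add, hk]
  have hphase : -((c : ℂ) * ↑(t + T)) * Complex.I =
      -((c : ℂ) * t) * Complex.I + ((-m : ℤ) : ℂ) * (2 * π * Complex.I) := by
    have hm' : (c : ℂ) * T = m * (2 * π) := by exact_mod_cast hm
    push_cast
    linear_combination (-Complex.I) * hm'
  simp only [sphereGeodesic]
  rw [hω, cos_add_int_mul_two_pi, sin_add_int_mul_two_pi, hphase, Complex.exp_add,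
    Complex.exp_int_mul_two_pi_mul_I, mul_one]

theorem sin_eq_zero_of_sphereGeodesic_eq (hpv : LinearIndependent ℂ ![p, v]) {T : ℝ}
    (hT : sphereGeodesic p v c T = p) : sin (‖v‖ * T) = 0 ∧ sin (c * T) = 0 := by
  have hv : ‖v‖ ≠ 0 := norm_ne_zero_iff.2 (hpv.ne_zero 1)
  rw [sphereGeodesic, smul_add, smul_smul, smul_smul] at hT
  obtain ⟨hcos, hsin⟩ := hpv.eq_one_and_eq_zero_of_smul_add_smul_eq hT
  refine ⟨?_, ?_⟩
  · have := (mul_eq_zero.1 hsin).resolve_left (Complex.exp_ne_zero _)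
    exact (div_eq_zero_iff.1 (Complex.ofReal_eq_zero.1 this)).resolve_right hv
  · -- A real multiple of the phase `e^{-icT}` equals `1`, so the phase is real.
    have him := congrArg Complex.im hcos
    have hcos0 : cos (‖v‖ * T) ≠ 0 := by
      rintro h0
      rw [h0, Complex.ofReal_zero, mul_zero] at hcos
      exact zero_ne_one hcos
    have he : (Complex.exp (-(c * T) * Complex.I)).im = -sin (c * T) := by
      rw [show -((c : ℂ) * T) * Complex.I = ((-(c * T) : ℝ) : ℂ) * Complex.I by push_cast; ring,
        Complex.exp_ofReal_mul_I_im, sin_neg]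
    rw [Complex.mul_im, Complex.ofReal_re, Complex.ofReal_im, mul_zero, zero_add,
      Complex.one_im, he] at him
    simpa [hcos0] using him

end Geodesic

/-- Closedness criterion for sub-Riemannian geodesics on `S^{2n+1}`: an arc-length
parameterized geodesic `γ(t) = e^{-ict} γ_R(t)` is periodic iff `c/√(1+c²)` is rational. -/
theorem sphere_geodesic_closed_iff (n : ℕ) (p v : EuclideanSpace ℂ (Fin (n + 1)))
    (hp : ‖p‖ = 1) (htan : (inner ℂ v p : ℂ).re = 0)
    (c : ℝ) (hc : c = (inner ℂ v (Complex.I • p) : ℂ).re)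
    (harc : ‖v‖ ^ 2 = 1 + c ^ 2)
    (γ : ℝ → EuclideanSpace ℂ (Fin (n + 1)))
    (hγ : ∀ t, γ t = Complex.exp (-(c * t) * Complex.I) •
      ((Real.cos (‖v‖ * t) : ℂ) • p + ((Real.sin (‖v‖ * t) / ‖v‖ : ℝ) : ℂ) • v)) :
    (∃ T > 0, ∀ t, γ (t + T) = γ t) ↔ ∃ q : ℚ, c / Real.sqrt (1 + c ^ 2) = q := by
  have hv : ‖v‖ = √(1 + c ^ 2) := by rw [← harc, sqrt_sq (norm_nonneg v)]
  have hpv : LinearIndependent ℂ ![p, v] := by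
    refine linearIndependent_pair_of_norm_inner_lt ?_
    rw [norm_inner_symm, Complex.norm_inner_eq_abs_re_inner_I_smul htan, ← hc, hp, one_mul, hv]
    exact (lt_sqrt (abs_nonneg c)).2 (by rw [sq_abs]; linarith)
  have hv0 : 0 < ‖v‖ := norm_pos_iff.2 (hpv.ne_zero 1)
  obtain rfl : γ = sphereGeodesic p v c := funext hγ
  rw [← hv]
  constructor
  · rintro ⟨T, hT, hper⟩
    obtain ⟨hvT, hcT⟩ := sin_eq_zero_of_sphereGeodesic_eq hpv (by simpa using hper 0)
    exact exists_rat_div_eq_of_sin_mul_eq_zero (mul_pos hv0 hT).ne' hvT hcT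
  · rintro ⟨q, hq⟩
    obtain ⟨T, hT, k, m, hk, hm⟩ := exists_pos_mul_eq_int_mul_two_pi hv0 hq
    exact ⟨T, hT, sphereGeodesic_periodic hk hm⟩
end

section
/- Let p = (1,0,0,0) ∈ S³ ⊂ ℝ⁴ ≅ ℂ², v = (0, v_{y₁}, v_{x₂}, v_{y₂}) with v_{x₂}² + v_{y₂}² = 1, and let γ(t) = e^{-i v_{y₁} t}·(p cos(‖v‖t) + (v/‖v‖) sin(‖v‖t)) (scalar multiplication by the unit complex number acting componentwise on ℂ²). Then γ is parameterized by arc length: ‖γ̇(t)‖ = 1 for all t. -/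
/-!
Write `v = i a p + w` with `p, w` orthonormal, so `‖v‖² = a² + 1`. Rotating the velocity back by
`e^{iat}` turns it into `F' - i a F`, where `F` is the great circle through `p` in direction `v`;
in the frame `(p, w)` this is `-(sin/‖v‖) p + (cos - i a sin/‖v‖) w`, of squared length
`sin² (1 + a²)/‖v‖² + cos² = 1`.
-/

open Complex InnerProductSpace

section

variable {E : Type*} [NormedAddCommGroup E] [InnerProductSpace ℂ E]

theorem norm_smul_add_smul_sq_of_inner_eq_zero {p w : E} (hpw : ⟪p, w⟫_ℂ = 0) (hp : ‖p‖ = 1)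
    (hw : ‖w‖ = 1) (x y : ℂ) : ‖x • p + y • w‖ ^ 2 = ‖x‖ ^ 2 + ‖y‖ ^ 2 := by
  have h : ⟪x • p, y • w⟫_ℂ = 0 := by rw [inner_smul_left, inner_smul_right, hpw, mul_zero, mul_zero]
  rw [sq, sq, sq, norm_add_sq_eq_norm_sq_add_norm_sq_of_inner_eq_zero _ _ h, norm_smul, norm_smul,
    hp, hw, mul_one, mul_one]

theorem norm_exp_neg_mul_I (a t : ℝ) : ‖Complex.exp (-(a * t) * I)‖ = 1 := by
  simpa using norm_exp_ofReal_mul_I (-(a * t))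

theorem norm_sub_mul_I_sq (x y : ℝ) : ‖(x : ℂ) - y * I‖ ^ 2 = x ^ 2 + y ^ 2 := by
  rw [sub_eq_add_neg, ← neg_mul, ← ofReal_neg, norm_add_mul_I, Real.sq_sqrt (by positivity), neg_sq]

theorem HasDerivAt.cexp_neg_mul_I_smul {f : ℝ → E} {f' : E} {t : ℝ} (hf : HasDerivAt f f' t)
    (a : ℝ) :
    HasDerivAt (fun s : ℝ => Complex.exp (-(a * s) * I) • f s)
      (Complex.exp (-(a * t) * I) • (f' - (a * I) • f t)) t := by
  have hphase : HasDerivAt (fun s : ℝ => Complex.exp (-(a * s) * I))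
      (Complex.exp (-(a * t) * I) * (-a * I)) t := by
    simpa using ((((hasDerivAt_id t).ofReal_comp).const_mul (a : ℂ)).neg.mul_const I).cexp
  exact (hphase.smul hf).congr_deriv (by module)

theorem hasDerivAt_cos_smul_add_sin_div_smul (p v : E) {ω : ℝ} (hω : ω ≠ 0) (t : ℝ) :
    HasDerivAt (fun s : ℝ => (Real.cos (ω * s) : ℂ) • p + ((Real.sin (ω * s) / ω : ℝ) : ℂ) • v)
      (((-(ω * Real.sin (ω * t)) : ℝ) : ℂ) • p + (Real.cos (ω * t) : ℂ) • v) t := by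
  have hcos : HasDerivAt (fun s : ℝ => Real.cos (ω * s)) (-(ω * Real.sin (ω * t))) t := by
    simpa [mul_comm] using ((hasDerivAt_id t).const_mul ω).cos
  have hsin : HasDerivAt (fun s : ℝ => Real.sin (ω * s) / ω) (Real.cos (ω * t)) t := by
    simpa [mul_comm, hω] using (((hasDerivAt_id t).const_mul ω).sin).div_const ω
  exact (hcos.ofReal_comp.smul_const p).add (hsin.ofReal_comp.smul_const v)

theorem norm_deriv_exp_smul_great_circle {p w : E} (hpw : ⟪p, w⟫_ℂ = 0) (hp : ‖p‖ = 1)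
    (hw : ‖w‖ = 1) (a : ℝ) {v : E} (hv : v = (a * I) • p + w) (t : ℝ) :
    ‖deriv (fun s : ℝ => Complex.exp (-(a * s) * I) •
      ((Real.cos (‖v‖ * s) : ℂ) • p + ((Real.sin (‖v‖ * s) / ‖v‖ : ℝ) : ℂ) • v)) t‖ = 1 := by
  have hv_sq : ‖v‖ ^ 2 = a ^ 2 + 1 := by
    rw [hv, ← one_smul ℂ w, norm_smul_add_smul_sq_of_inner_eq_zero hpw hp hw]
    simp
  set ω := ‖v‖
  have hω : ω ≠ 0 := fun h => by nlinarith [h ▸ hv_sq]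
  set c := Real.cos (ω * t)
  set s := Real.sin (ω * t)
  have hcoef : (-(ω * s) + a ^ 2 * (s / ω) : ℂ) = -(s / ω) := by
    have : -(ω * s) + a ^ 2 * (s / ω) = -(s / ω) := by
      field_simp
      linear_combination (-s) * hv_sq
    exact_mod_cast this
  -- the velocity, rotated back by `e^{iat}`, in the orthonormal frame `(p, w)`
  have hframe : (((-(ω * s)) : ℝ) : ℂ) • p + (c : ℂ) • v -
        (a * I) • ((c : ℂ) • p + ((s / ω : ℝ) : ℂ) • v) =
      ((-(s / ω) : ℝ) : ℂ) • p + (c - ((a * (s / ω) : ℝ) : ℂ) * I) • w := by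
    rw [hv]
    push_cast
    linear_combination (norm := module) hcoef • p - (I_sq • ((a : ℂ) ^ 2 * (s / ω)) • p)
  rw [((hasDerivAt_cos_smul_add_sin_div_smul p v hω t).cexp_neg_mul_I_smul a).deriv, norm_smul,
    hframe, norm_exp_neg_mul_I, one_mul, ← pow_eq_one_iff_of_nonneg (norm_nonneg _) two_ne_zero,
    norm_smul_add_smul_sq_of_inner_eq_zero hpw hp hw, norm_real, Real.norm_eq_abs, sq_abs,
    norm_sub_mul_I_sq]
  field_simp
  linear_combination ω ^ 2 * Real.sin_sq_add_cos_sq (ω * t) - s ^ 2 * hv_sq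

end

/-- The sub-Riemannian geodesic of `S³ ⊂ ℂ²` starting at `p = (1,0)` with great-circle
initial velocity `v = (i v_{y₁}, v_{x₂} + i v_{y₂})`, with `v_{x₂}² + v_{y₂}² = 1`, is
parameterized by arc length: `‖γ̇(t)‖ = 1` for all `t`. -/
theorem s3_geodesic_arclength (vy1 vx2 vy2 : ℝ) (hunit : vx2 ^ 2 + vy2 ^ 2 = 1)
    (p v : EuclideanSpace ℂ (Fin 2))
    (hp : p = !₂[1, 0])
    (hv : v = !₂[Complex.I * vy1, vx2 + Complex.I * vy2])
    (γ : ℝ → EuclideanSpace ℂ (Fin 2))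
    (hγ : ∀ t, γ t = Complex.exp (-(vy1 * t) * Complex.I) •
      ((Real.cos (‖v‖ * t) : ℂ) • p + ((Real.sin (‖v‖ * t) / ‖v‖ : ℝ) : ℂ) • v)) :
    ∀ t, ‖deriv γ t‖ = 1 := by
  set w : EuclideanSpace ℂ (Fin 2) := !₂[0, vx2 + I * vy2]
  have hpw : ⟪p, w⟫_ℂ = 0 := by
    simp [hp, w, PiLp.inner_apply, Fin.sum_univ_two]
  have hp_norm : ‖p‖ = 1 := by
    simp [hp, EuclideanSpace.norm_eq]
  have hw_norm : ‖w‖ = 1 := by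
    simp [w, EuclideanSpace.norm_eq, mul_comm I, norm_add_mul_I, hunit]
  have hv_frame : v = (vy1 * I) • p + w := by
    ext i
    fin_cases i <;> simp [hv, hp, w, mul_comm]
  intro t
  rw [show γ = _ from funext hγ]
  exact norm_deriv_exp_smul_great_circle hpw hp_norm hw_norm vy1 hv_frame t
end

section
/- For the orthonormal frame X₁,...,X₇ on S⁷ from octonion multiplication, one has ⟨X_b(p), [X_a, X_b](p)⟩ = 0 for all a ∈ {2,...,7}, b ∈ {1,...,7}, and all p ∈ S⁷; here [X_a,X_b] is the Lie bracket of the vector fields on ℝ⁸ (which is tangent to S⁷). -/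
/-!
Each `X i` is the linear vector field `p ↦ A p` of an orthogonal skew-symmetric matrix `A`
(multiplication by a unit imaginary octonion), and the Lie bracket of linear vector fields
is `[A, B] p = B (A p) - A (B p)`. Since `B` is an isometry,
`⟪B p, B (A p) - A (B p)⟫ = ⟪p, A p⟫ - ⟪B p, A (B p)⟫`, and both terms vanish because `A`
is skew.
-/

open scoped RealInnerProductSpace

theorem IsLinearMap.fderiv_apply {E F : Type*} [NormedAddCommGroup E] [NormedSpace ℝ E]
    [FiniteDimensional ℝ E] [NormedAddCommGroup F] [NormedSpace ℝ F] {f : E → F}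
    (hf : IsLinearMap ℝ f) (p v : E) : fderiv ℝ f p v = f v := by
  rw [show f = (hf.mk' f).toContinuousLinearMap from rfl, ContinuousLinearMap.fderiv]

theorem VectorField.lieBracket_of_isLinearMap {E : Type*} [NormedAddCommGroup E]
    [NormedSpace ℝ E] [FiniteDimensional ℝ E] {V W : E → E} (hV : IsLinearMap ℝ V)
    (hW : IsLinearMap ℝ W) (p : E) :
    VectorField.lieBracket ℝ V W p = W (V p) - V (W p) := by
  simp only [VectorField.lieBracket_eq, hV.fderiv_apply, hW.fderiv_apply]

theorem VectorField.inner_lieBracket_eq_zero_of_skew_of_isometry {E : Type*} [NormedAddCommGroup E]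
    [InnerProductSpace ℝ E] [FiniteDimensional ℝ E] {V W : E → E} (hV : IsLinearMap ℝ V)
    (hW : IsLinearMap ℝ W) (hV_skew : ∀ x, ⟪x, V x⟫ = 0) (hW_isom : ∀ x y, ⟪W x, W y⟫ = ⟪x, y⟫)
    (p : E) : ⟪W p, VectorField.lieBracket ℝ V W p⟫ = 0 := by
  rw [lieBracket_of_isLinearMap hV hW, inner_sub_right, hW_isom, hV_skew, hV_skew, sub_zero]

/-- The frame `X₁, …, X₇` (octonion multiplication by the imaginary units) in coordinates,
indexed from `X 0 = X₁`. -/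
def IsOctonionFrame (X : Fin 7 → EuclideanSpace ℝ (Fin 8) → EuclideanSpace ℝ (Fin 8)) : Prop :=
  ∀ p : EuclideanSpace ℝ (Fin 8),
    X 0 p = ![-p 1, p 0, -p 3, p 2, -p 5, p 4, -p 7, p 6] ∧
    X 1 p = ![-p 2, p 3, p 0, -p 1, -p 6, p 7, p 4, -p 5] ∧
    X 2 p = ![-p 3, -p 2, p 1, p 0, p 7, p 6, -p 5, -p 4] ∧
    X 3 p = ![-p 4, p 5, p 6, -p 7, p 0, -p 1, -p 2, p 3] ∧
    X 4 p = ![-p 5, -p 4, -p 7, -p 6, p 1, p 0, p 3, p 2] ∧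
    X 5 p = ![-p 6, p 7, -p 4, p 5, p 2, -p 3, p 0, -p 1] ∧
    X 6 p = ![-p 7, -p 6, p 5, p 4, -p 3, -p 2, p 1, p 0]

namespace IsOctonionFrame

variable {X : Fin 7 → EuclideanSpace ℝ (Fin 8) → EuclideanSpace ℝ (Fin 8)}

theorem isLinearMap (hX : IsOctonionFrame X) (i : Fin 7) : IsLinearMap ℝ (X i) := by
  rw [IsOctonionFrame] at hX
  constructor <;> intros <;> ext j <;> fin_cases i <;> fin_cases j <;> simp [hX] <;> ring

theorem inner_self_apply_eq_zero (hX : IsOctonionFrame X) (i : Fin 7)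
    (x : EuclideanSpace ℝ (Fin 8)) : ⟪x, X i x⟫ = 0 := by
  rw [IsOctonionFrame] at hX
  fin_cases i <;> simp [PiLp.inner_apply, Fin.sum_univ_eight, hX] <;> ring

theorem inner_map_map (hX : IsOctonionFrame X) (i : Fin 7) (x y : EuclideanSpace ℝ (Fin 8)) :
    ⟪X i x, X i y⟫ = ⟪x, y⟫ := by
  rw [IsOctonionFrame] at hX
  fin_cases i <;> simp [PiLp.inner_apply, Fin.sum_univ_eight, hX] <;> ring

end IsOctonionFrame

/-- For the octonionic frame `X₁,…,X₇` on `S⁷` one has `⟨X_b(p), [X_a, X_b](p)⟩ = 0` for all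
`a ∈ {2,…,7}` (i.e. `a ≠ 0` in the indexing `X 0 = X₁, …, X 6 = X₇`), all `b ∈ {1,…,7}` and
all `p ∈ S⁷`, where `[f,g](p) = Dg_p(f(p)) − Df_p(g(p))` is the Lie bracket of vector
fields on `ℝ⁸`. -/
theorem s7_frame_bracket_orthogonality
    (X : Fin 7 → EuclideanSpace ℝ (Fin 8) → EuclideanSpace ℝ (Fin 8))
    (hX : ∀ p : EuclideanSpace ℝ (Fin 8),
      X 0 p = ![-p 1, p 0, -p 3, p 2, -p 5, p 4, -p 7, p 6] ∧
      X 1 p = ![-p 2, p 3, p 0, -p 1, -p 6, p 7, p 4, -p 5] ∧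
      X 2 p = ![-p 3, -p 2, p 1, p 0, p 7, p 6, -p 5, -p 4] ∧
      X 3 p = ![-p 4, p 5, p 6, -p 7, p 0, -p 1, -p 2, p 3] ∧
      X 4 p = ![-p 5, -p 4, -p 7, -p 6, p 1, p 0, p 3, p 2] ∧
      X 5 p = ![-p 6, p 7, -p 4, p 5, p 2, -p 3, p 0, -p 1] ∧
      X 6 p = ![-p 7, -p 6, p 5, p 4, -p 3, -p 2, p 1, p 0])
    (bracket :
      (EuclideanSpace ℝ (Fin 8) → EuclideanSpace ℝ (Fin 8)) →
      (EuclideanSpace ℝ (Fin 8) → EuclideanSpace ℝ (Fin 8)) →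
      (EuclideanSpace ℝ (Fin 8) → EuclideanSpace ℝ (Fin 8)))
    (hbr : ∀ f g p, bracket f g p = fderiv ℝ g p (f p) - fderiv ℝ f p (g p)) :
    ∀ a b : Fin 7, a ≠ 0 → ∀ p : EuclideanSpace ℝ (Fin 8), ‖p‖ = 1 →
      (inner ℝ (X b p) (bracket (X a) (X b) p) : ℝ) = 0 := by
  have hX : IsOctonionFrame X := hX
  intro a b _ p _
  have hbr_eq : bracket (X a) (X b) p = VectorField.lieBracket ℝ (X a) (X b) p := hbr _ _ _
  rw [hbr_eq]
  exact VectorField.inner_lieBracket_eq_zero_of_skew_of_isometry (hX.isLinearMap a)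
    (hX.isLinearMap b) (hX.inner_self_apply_eq_zero a) (hX.inner_map_map b) p
end
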